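/- Let m, n, a, b, c be natural numbers with m ≥ c, n−b+c ≥ 0, a ≤ c−1, and m−n+b−2c ≥ 1. Then for every 0 ≤ j ≤ a: (i) the element q^(−a(−1+2m+2b−4c−a)/2)·qbinom(n−b+c+a, a)·λ^{a,b,c}_{m,n,j} of ℚ(q) is nonzero of degree a(a−b+c) + j(a−2c−j−2); (ii) the element q^(−a(−1+2m+2b−4c−a)/2 − a)·qbinom(n−b+c+a, a)·λ^{a,b,c}_{m,n−1,j} is nonzero of the same degree a(a−b+c) + j(a−2c−j−2). -/
import Mathlib


open scoped BigOperators

/-- The generator `q` of the field of rational functions `ℚ(q)`. -/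
noncomputable def q : RatFunc ℚ := RatFunc.X

/-- The balanced quantum integer `[a] = (q^a - q^(-a))/(q - q⁻¹)`. -/
noncomputable def qint (a : ℤ) : RatFunc ℚ := (q ^ a - q ^ (-a)) / (q - q⁻¹)

/-- The quantum factorial `[k]! = [1][2]⋯[k]`. -/
noncomputable def qfact (k : ℕ) : RatFunc ℚ := ∏ i ∈ Finset.range k, qint ((i : ℤ) + 1)

/-- The balanced quantum binomial `qbinom a b = [a][a-1]⋯[a-b+1]/[b]!` for `b ≥ 0`,
and `0` for `b < 0`. -/
noncomputable def qbinom (a b : ℤ) : RatFunc ℚ :=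
  if b < 0 then 0
  else (∏ i ∈ Finset.range b.toNat, qint (a - (i : ℤ))) / qfact b.toNat

/-- The product `[α][α+2]⋯[α+2k−2]` of `k` balanced quantum integers. -/
noncomputable def prodQint (α : ℤ) (k : ℕ) : RatFunc ℚ :=
  ∏ i ∈ Finset.range k, qint (α + 2 * (i : ℤ))

/-- `Ω^(a,b,c)_{m,n,x,θ,ς} = Σ_{k+y=θ} (−1)^k·([α][α+2]⋯[α+2k−2]/[k]!)·q^(ς₂(y−x))·
q^(−y(y+1+2n+2c−2b)/2 − x(x−1+2m+2b−4c−2a−2y+2k)/2)·qbinom(n−b+c+x, x)·qbinom(m−c+θ, y)`,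
where `α = m − n + b − 2c + ς₂`. -/
noncomputable def OmegaA (ς : ℤ × ℤ) (m n a b c : ℤ) (x θ : ℕ) : RatFunc ℚ :=
  ∑ k ∈ Finset.range (θ + 1),
    (fun y : ℤ =>
      (-1 : RatFunc ℚ) ^ k * (prodQint (m - n + b - 2 * c + ς.2) k / qfact k) *
        q ^ (ς.2 * (y - (x : ℤ))) *
        q ^ ((-(y * (y + 1 + 2 * n + 2 * c - 2 * b)) -
              (x : ℤ) * ((x : ℤ) - 1 + 2 * m + 2 * b - 4 * c - 2 * a - 2 * y + 2 * (k : ℤ))) / 2) *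
        qbinom (n - b + c + (x : ℤ)) (x : ℤ) *
        qbinom (m - c + (θ : ℤ)) y) ((θ - k : ℕ) : ℤ)

/-- The coefficient `λ^{a,b,c}_{m,n,j}` of Lemma 5.4:
`(−1)^j·q^(−(2+3a+c)j+a²−a+j(1+a))·q^(−(a−j)(a−j+1+2n+2c−2b)/2)·([m][m−1]⋯[m+1−a+j])·
([α][α+2]⋯[α+2j−2])·qbinom(a,j)·[c−1−a]!/[c−1]!`, where `α = m − n + b − 2c`. -/
noncomputable def lam (m n b : ℤ) (a c j : ℕ) : RatFunc ℚ :=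
  (-1 : RatFunc ℚ) ^ j *
    q ^ (-(2 + 3 * (a : ℤ) + (c : ℤ)) * (j : ℤ) + (a : ℤ) ^ 2 - (a : ℤ) +
          (j : ℤ) * (1 + (a : ℤ))) *
    q ^ ((-(((a : ℤ) - (j : ℤ)) * ((a : ℤ) - (j : ℤ) + 1 + 2 * n + 2 * c - 2 * b))) / 2) *
    (∏ i ∈ Finset.range (a - j), qint (m - (i : ℤ))) *
    prodQint (m - n + b - 2 * c) j *
    qbinom (a : ℤ) (j : ℤ) * (qfact (c - 1 - a) / qfact (c - 1))


lemma q_ne : q ≠ 0 := RatFunc.X_ne_zero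

lemma q_pow_deg (n : ℕ) : ((q : RatFunc ℚ) ^ n).intDegree = n := by
  induction n with
  | zero => simpa using RatFunc.intDegree_one
  | succ n ih =>
    rw [pow_succ, RatFunc.intDegree_mul (pow_ne_zero _ q_ne) q_ne, ih]
    have : q.intDegree = 1 := RatFunc.intDegree_X
    rw [this]; push_cast; ring

lemma intDegree_inv (x : RatFunc ℚ) (hx : x ≠ 0) : (x⁻¹).intDegree = -x.intDegree := by
  have h := RatFunc.intDegree_mul hx (inv_ne_zero hx)
  rw [mul_inv_cancel₀ hx, RatFunc.intDegree_one] at h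
  omega

lemma q_zpow_spec (z : ℤ) : (q ^ z : RatFunc ℚ) ≠ 0 ∧ 2 * (q ^ z).intDegree = 2 * z := by
  refine ⟨zpow_ne_zero z q_ne, ?_⟩
  cases z with
  | ofNat n => rw [Int.ofNat_eq_coe, zpow_natCast, q_pow_deg]
  | negSucc n =>
    rw [zpow_negSucc, intDegree_inv _ (pow_ne_zero _ q_ne), q_pow_deg, Int.negSucc_eq]
    push_cast; ring

lemma pol_spec (k : ℕ) (hk : 1 ≤ k) :
    ((q : RatFunc ℚ) ^ k - 1) ≠ 0 ∧ ((q : RatFunc ℚ) ^ k - 1).intDegree = k := by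
  have hrep : ((q : RatFunc ℚ) ^ k - 1) =
      algebraMap (Polynomial ℚ) (RatFunc ℚ) (Polynomial.X ^ k - Polynomial.C 1) := by
    simp [q, map_sub, map_pow, RatFunc.algebraMap_X, map_one]
  have hp : (Polynomial.X ^ k - Polynomial.C (1:ℚ)) ≠ 0 :=
    Polynomial.X_pow_sub_C_ne_zero hk 1
  constructor
  · rw [hrep]
    exact RatFunc.algebraMap_ne_zero hp
  · rw [hrep, RatFunc.intDegree_polynomial, Polynomial.natDegree_X_pow_sub_C]

lemma qint_spec (t : ℤ) (ht : 1 ≤ t) : qint t ≠ 0 ∧ 2 * (qint t).intDegree = 2 * (t - 1) := by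
  have h1 : q ^ t - q ^ (-t) = q ^ (-t) * ((q : RatFunc ℚ) ^ ((2*t).toNat) - 1) := by
    rw [mul_sub, mul_one, ← zpow_natCast q ((2*t).toNat), ← zpow_add₀ q_ne,
      Int.toNat_of_nonneg (by omega : (0:ℤ) ≤ 2*t)]
    have : -t + 2*t = t := by ring
    rw [this]
  have h2 : q - q⁻¹ = q⁻¹ * ((q : RatFunc ℚ) ^ (2:ℕ) - 1) := by
    rw [mul_sub, mul_one, sq, ← mul_assoc, inv_mul_cancel₀ q_ne, one_mul]
  have hN := pol_spec ((2*t).toNat) (by omega)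
  have hD := pol_spec 2 (by omega)
  have key : qint t = (q ^ (-t) * ((q:RatFunc ℚ) ^ ((2*t).toNat) - 1)) /
      (q⁻¹ * ((q:RatFunc ℚ) ^ (2:ℕ) - 1)) := by rw [qint, h1, h2]
  have hnum : (q ^ (-t) * ((q:RatFunc ℚ) ^ ((2*t).toNat) - 1)) ≠ 0 :=
    mul_ne_zero (zpow_ne_zero _ q_ne) hN.1
  have hden : (q⁻¹ * ((q:RatFunc ℚ) ^ (2:ℕ) - 1)) ≠ 0 :=
    mul_ne_zero (inv_ne_zero q_ne) hD.1
  constructor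
  · rw [key]; exact div_ne_zero hnum hden
  · rw [key, div_eq_mul_inv, RatFunc.intDegree_mul hnum (inv_ne_zero hden),
      intDegree_inv _ hden, RatFunc.intDegree_mul (zpow_ne_zero _ q_ne) hN.1,
      RatFunc.intDegree_mul (inv_ne_zero q_ne) hD.1, intDegree_inv _ q_ne,
      hN.2, hD.2]
    have h3 := (q_zpow_spec (-t)).2
    have h4 : q.intDegree = 1 := RatFunc.intDegree_X
    rw [h4]
    rw [Int.toNat_of_nonneg (by omega : (0:ℤ) ≤ 2*t)]
    omega

lemma mul_spec2 {x y : RatFunc ℚ} {dx dy : ℤ} (hx : x ≠ 0 ∧ 2 * x.intDegree = dx)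
    (hy : y ≠ 0 ∧ 2 * y.intDegree = dy) : x * y ≠ 0 ∧ 2 * (x * y).intDegree = dx + dy :=
  ⟨mul_ne_zero hx.1 hy.1, by
    rw [RatFunc.intDegree_mul hx.1 hy.1, mul_add, hx.2, hy.2]⟩

lemma div_spec2 {x y : RatFunc ℚ} {dx dy : ℤ} (hx : x ≠ 0 ∧ 2 * x.intDegree = dx)
    (hy : y ≠ 0 ∧ 2 * y.intDegree = dy) : x / y ≠ 0 ∧ 2 * (x / y).intDegree = dx - dy := by
  refine ⟨div_ne_zero hx.1 hy.1, ?_⟩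
  rw [div_eq_mul_inv, RatFunc.intDegree_mul hx.1 (inv_ne_zero hy.1), intDegree_inv _ hy.1,
    mul_add, hx.2, mul_neg, hy.2]
  ring

lemma prod_spec (g : ℕ → ℤ) (c0 d : ℤ) (k : ℕ) (hg : ∀ i : ℕ, g i = c0 + 1 + d * i)
    (h : ∀ i : ℕ, i < k → 1 ≤ g i) :
    (∏ i ∈ Finset.range k, qint (g i)) ≠ 0 ∧
      2 * (∏ i ∈ Finset.range k, qint (g i)).intDegree = 2 * k * c0 + d * (k * (k - 1)) := by
  induction k with
  | zero => simp [RatFunc.intDegree_one]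
  | succ n ih =>
    obtain ⟨h1, h2⟩ := ih (fun i hi => h i (by omega))
    have hg2 := qint_spec _ (h n (by omega))
    rw [Finset.prod_range_succ]
    refine ⟨mul_ne_zero h1 hg2.1, ?_⟩
    rw [RatFunc.intDegree_mul h1 hg2.1, mul_add, h2, hg2.2, hg n]
    push_cast
    ring

lemma qfact_spec (k : ℕ) : qfact k ≠ 0 ∧ 2 * (qfact k).intDegree = (k : ℤ) * (k - 1) := by
  have := prod_spec (fun i : ℕ => (i : ℤ) + 1) 0 1 k (fun i => by ring) (fun i _ => show (1:ℤ) ≤ (i:ℤ) + 1 by omega)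
  rw [show qfact k = ∏ i ∈ Finset.range k, qint ((fun i : ℕ => (i : ℤ) + 1) i) from rfl]
  refine ⟨this.1, ?_⟩
  rw [this.2]; ring

lemma qbinom_spec (t : ℤ) (k : ℕ) (h : (k : ℤ) ≤ t) :
    qbinom t (k : ℤ) ≠ 0 ∧
      2 * (qbinom t (k : ℤ)).intDegree = 2 * k * (t - 1) - 2 * (k * (k - 1)) := by
  have hb : qbinom t (k : ℤ) = (∏ i ∈ Finset.range k, qint (t - (i : ℤ))) / qfact k := by
    rw [qbinom, if_neg (by omega), Int.toNat_natCast]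
  have hnum := prod_spec (fun i : ℕ => t - (i : ℤ)) (t - 1) (-1) k (fun i => by ring)
    (fun i hi => show (1:ℤ) ≤ t - (i:ℤ) by omega)
  have hden := qfact_spec k
  have := div_spec2 hnum hden
  rw [hb]
  refine ⟨this.1, ?_⟩
  rw [this.2]; ring

lemma neg_one_spec (j : ℕ) :
    ((-1 : RatFunc ℚ) ^ j) ≠ 0 ∧ 2 * ((-1 : RatFunc ℚ) ^ j).intDegree = 0 := by
  refine ⟨pow_ne_zero _ (neg_ne_zero.mpr one_ne_zero), ?_⟩
  have h1 : ((-1 : RatFunc ℚ)).intDegree = 0 := by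
    rw [show (-1 : RatFunc ℚ) = -(1) from rfl, RatFunc.intDegree_neg, RatFunc.intDegree_one]
  rcases Nat.even_or_odd j with he | ho
  · rw [he.neg_one_pow, RatFunc.intDegree_one]; ring
  · rw [ho.neg_one_pow, h1]; ring

lemma lam_aux (m a b c j : ℕ) (n' N : ℤ) (hm : c ≤ m) (hn : 0 ≤ N - (b : ℤ) + (c : ℤ))
    (hac : a + 1 ≤ c) (hj : j ≤ a) (hα : 1 ≤ (m : ℤ) - n' + (b : ℤ) - 2 * (c : ℤ)) (E : ℤ) :
    q ^ E * qbinom (N - (b : ℤ) + (c : ℤ) + (a : ℤ)) (a : ℤ) * lam (m : ℤ) n' (b : ℤ) a c j ≠ 0 ∧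
    2 * (q ^ E * qbinom (N - (b : ℤ) + (c : ℤ) + (a : ℤ)) (a : ℤ) *
        lam (m : ℤ) n' (b : ℤ) a c j).intDegree =
      2 * E
      + 2 * (-(2 + 3 * (a : ℤ) + (c : ℤ)) * (j : ℤ) + (a : ℤ) ^ 2 - (a : ℤ) +
          (j : ℤ) * (1 + (a : ℤ)))
      + (-(((a : ℤ) - (j : ℤ)) * ((a : ℤ) - (j : ℤ) + 1 + 2 * n' + 2 * (c : ℤ) - 2 * (b : ℤ))))
      + (2 * ((a : ℤ) - (j : ℤ)) * ((m : ℤ) - 1) - ((a : ℤ) - (j : ℤ)) * ((a : ℤ) - (j : ℤ) - 1))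
      + (2 * (j : ℤ) * ((m : ℤ) - n' + (b : ℤ) - 2 * (c : ℤ) - 1) + 2 * ((j : ℤ) * ((j : ℤ) - 1)))
      + (2 * (j : ℤ) * ((a : ℤ) - 1) - 2 * ((j : ℤ) * ((j : ℤ) - 1)))
      + (((c : ℤ) - 1 - (a : ℤ)) * ((c : ℤ) - 2 - (a : ℤ)) - ((c : ℤ) - 1) * ((c : ℤ) - 2))
      + (2 * (a : ℤ) * (N - (b : ℤ) + (c : ℤ) + (a : ℤ) - 1) - 2 * ((a : ℤ) * ((a : ℤ) - 1))) := by
  have hqE := q_zpow_spec E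
  have hQB := qbinom_spec (N - (b : ℤ) + (c : ℤ) + (a : ℤ)) a (by omega)
  have hs := neg_one_spec j
  have hE2 := q_zpow_spec (-(2 + 3 * (a : ℤ) + (c : ℤ)) * (j : ℤ) + (a : ℤ) ^ 2 - (a : ℤ) +
      (j : ℤ) * (1 + (a : ℤ)))
  -- E3
  set X3 : ℤ := -(((a : ℤ) - (j : ℤ)) * ((a : ℤ) - (j : ℤ) + 1 + 2 * n' + 2 * (c : ℤ) - 2 * (b : ℤ)))
    with hX3
  have hdvd : (2 : ℤ) ∣ X3 := by
    obtain ⟨y, hy⟩ := Int.even_mul_succ_self ((a : ℤ) - (j : ℤ))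
    exact ⟨-y - ((a : ℤ) - (j : ℤ)) * (n' + (c : ℤ) - (b : ℤ)), by linear_combination -hy⟩
  have hE3 : q ^ (X3 / 2) ≠ 0 ∧ 2 * (q ^ (X3 / 2)).intDegree = X3 := by
    obtain ⟨h1, h2⟩ := q_zpow_spec (X3 / 2)
    exact ⟨h1, by rw [h2, Int.mul_ediv_cancel' hdvd]⟩
  have hP1 : (∏ i ∈ Finset.range (a - j), qint ((m : ℤ) - (i : ℤ))) ≠ 0 ∧
      2 * (∏ i ∈ Finset.range (a - j), qint ((m : ℤ) - (i : ℤ))).intDegree =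
        2 * ((a - j : ℕ) : ℤ) * ((m : ℤ) - 1) +
          (-1) * (((a - j : ℕ) : ℤ) * (((a - j : ℕ) : ℤ) - 1)) :=
    prod_spec (fun i : ℕ => (m : ℤ) - (i : ℤ)) ((m : ℤ) - 1) (-1) (a - j) (fun i => by ring)
      (fun i hi => show (1 : ℤ) ≤ (m : ℤ) - (i : ℤ) by
        have : (i : ℤ) < ((a - j : ℕ) : ℤ) := by exact_mod_cast hi
        omega)
  have hP2 : prodQint ((m : ℤ) - n' + (b : ℤ) - 2 * (c : ℤ)) j ≠ 0 ∧
      2 * (prodQint ((m : ℤ) - n' + (b : ℤ) - 2 * (c : ℤ)) j).intDegree =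
        2 * (j : ℤ) * ((m : ℤ) - n' + (b : ℤ) - 2 * (c : ℤ) - 1) +
          2 * ((j : ℤ) * ((j : ℤ) - 1)) :=
    prod_spec (fun i : ℕ => (m : ℤ) - n' + (b : ℤ) - 2 * (c : ℤ) + 2 * (i : ℤ))
      ((m : ℤ) - n' + (b : ℤ) - 2 * (c : ℤ) - 1) 2 j (fun i => by ring)
      (fun i hi => show (1 : ℤ) ≤ (m : ℤ) - n' + (b : ℤ) - 2 * (c : ℤ) + 2 * (i : ℤ) by omega)
  have hQB2 := qbinom_spec ((a : ℤ)) j (by exact_mod_cast hj)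
  have hR := div_spec2 (qfact_spec (c - 1 - a)) (qfact_spec (c - 1))
  have S := mul_spec2 (mul_spec2 hqE hQB)
    (mul_spec2 (mul_spec2 (mul_spec2 (mul_spec2 (mul_spec2 (mul_spec2 hs hE2) hE3) hP1) hP2)
      hQB2) hR)
  simp only [lam]
  refine ⟨S.1, ?_⟩
  rw [S.2]
  have h1 : ((a - j : ℕ) : ℤ) = (a : ℤ) - (j : ℤ) := by
    rw [Nat.cast_sub hj]
  have h2 : ((c - 1 - a : ℕ) : ℤ) = (c : ℤ) - 1 - (a : ℤ) := by
    rw [Nat.cast_sub (by omega), Nat.cast_sub (by omega)]; push_cast; ring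
  have h3 : ((c - 1 : ℕ) : ℤ) = (c : ℤ) - 1 := by
    rw [Nat.cast_sub (by omega)]; push_cast; ring
  rw [h1, h2, h3]
  ring

/-- Lemma 5.5 of the paper: the degree of the normalized coefficients
`q^(−a(−1+2m+2b−4c−a)/2)·qbinom(n−b+c+a,a)·λ^{a,b,c}_{m,n,j}` and
`q^(−a(−1+2m+2b−4c−a)/2−a)·qbinom(n−b+c+a,a)·λ^{a,b,c}_{m,n−1,j}`
both equal `a(a−b+c) + j(a−2c−j−2)` (in particular both elements are nonzero). -/
theorem lam_intDegree (m n a b c : ℕ) (hm : c ≤ m)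
    (hn : 0 ≤ (n : ℤ) - (b : ℤ) + (c : ℤ)) (hac : a + 1 ≤ c)
    (hα : 1 ≤ (m : ℤ) - (n : ℤ) + (b : ℤ) - 2 * (c : ℤ)) :
    ∀ j : ℕ, j ≤ a →
      (q ^ ((-((a : ℤ) * (-1 + 2 * (m : ℤ) + 2 * (b : ℤ) - 4 * (c : ℤ) - (a : ℤ)))) / 2) *
            qbinom ((n : ℤ) - (b : ℤ) + (c : ℤ) + (a : ℤ)) (a : ℤ) *
            lam (m : ℤ) (n : ℤ) (b : ℤ) a c j ≠ 0 ∧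
        (q ^ ((-((a : ℤ) * (-1 + 2 * (m : ℤ) + 2 * (b : ℤ) - 4 * (c : ℤ) - (a : ℤ)))) / 2) *
            qbinom ((n : ℤ) - (b : ℤ) + (c : ℤ) + (a : ℤ)) (a : ℤ) *
            lam (m : ℤ) (n : ℤ) (b : ℤ) a c j).intDegree =
          (a : ℤ) * ((a : ℤ) - (b : ℤ) + (c : ℤ)) +
            (j : ℤ) * ((a : ℤ) - 2 * (c : ℤ) - (j : ℤ) - 2)) ∧
      (q ^ ((-((a : ℤ) * (-1 + 2 * (m : ℤ) + 2 * (b : ℤ) - 4 * (c : ℤ) - (a : ℤ)))) / 2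
              - (a : ℤ)) *
            qbinom ((n : ℤ) - (b : ℤ) + (c : ℤ) + (a : ℤ)) (a : ℤ) *
            lam (m : ℤ) ((n : ℤ) - 1) (b : ℤ) a c j ≠ 0 ∧
        (q ^ ((-((a : ℤ) * (-1 + 2 * (m : ℤ) + 2 * (b : ℤ) - 4 * (c : ℤ) - (a : ℤ)))) / 2
              - (a : ℤ)) *
            qbinom ((n : ℤ) - (b : ℤ) + (c : ℤ) + (a : ℤ)) (a : ℤ) *
            lam (m : ℤ) ((n : ℤ) - 1) (b : ℤ) a c j).intDegree =
          (a : ℤ) * ((a : ℤ) - (b : ℤ) + (c : ℤ)) +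
            (j : ℤ) * ((a : ℤ) - 2 * (c : ℤ) - (j : ℤ) - 2)) := by
  intro j hj
  have hdvd1 : (2 : ℤ) ∣ -((a : ℤ) * (-1 + 2 * (m : ℤ) + 2 * (b : ℤ) - 4 * (c : ℤ) - (a : ℤ))) := by
    obtain ⟨y, hy⟩ := Int.even_mul_succ_self (a : ℤ)
    exact ⟨y + (a : ℤ) * (2 * (c : ℤ) - (m : ℤ) - (b : ℤ)), by linear_combination hy⟩
  have hE : 2 * ((-((a : ℤ) * (-1 + 2 * (m : ℤ) + 2 * (b : ℤ) - 4 * (c : ℤ) - (a : ℤ)))) / 2) =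
      -((a : ℤ) * (-1 + 2 * (m : ℤ) + 2 * (b : ℤ) - 4 * (c : ℤ) - (a : ℤ))) :=
    Int.mul_ediv_cancel' hdvd1
  have H1 := lam_aux m a b c j (n : ℤ) (n : ℤ) hm hn hac hj hα
    ((-((a : ℤ) * (-1 + 2 * (m : ℤ) + 2 * (b : ℤ) - 4 * (c : ℤ) - (a : ℤ)))) / 2)
  have H2 := lam_aux m a b c j ((n : ℤ) - 1) (n : ℤ) hm hn hac hj (by omega)
    ((-((a : ℤ) * (-1 + 2 * (m : ℤ) + 2 * (b : ℤ) - 4 * (c : ℤ) - (a : ℤ)))) / 2 - (a : ℤ))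
  refine ⟨⟨H1.1, ?_⟩, H2.1, ?_⟩
  · have h := H1.2
    have h2 : 2 * (q ^ ((-((a : ℤ) * (-1 + 2 * (m : ℤ) + 2 * (b : ℤ) - 4 * (c : ℤ) - (a : ℤ)))) / 2) *
          qbinom ((n : ℤ) - (b : ℤ) + (c : ℤ) + (a : ℤ)) (a : ℤ) *
          lam (m : ℤ) (n : ℤ) (b : ℤ) a c j).intDegree =
        2 * ((a : ℤ) * ((a : ℤ) - (b : ℤ) + (c : ℤ)) +
          (j : ℤ) * ((a : ℤ) - 2 * (c : ℤ) - (j : ℤ) - 2)) := by linear_combination h + hE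
    linarith
  · have h := H2.2
    have h2 : 2 * (q ^ ((-((a : ℤ) * (-1 + 2 * (m : ℤ) + 2 * (b : ℤ) - 4 * (c : ℤ) - (a : ℤ)))) / 2
            - (a : ℤ)) *
          qbinom ((n : ℤ) - (b : ℤ) + (c : ℤ) + (a : ℤ)) (a : ℤ) *
          lam (m : ℤ) ((n : ℤ) - 1) (b : ℤ) a c j).intDegree =
        2 * ((a : ℤ) * ((a : ℤ) - (b : ℤ) + (c : ℤ)) +
          (j : ℤ) * ((a : ℤ) - 2 * (c : ℤ) - (j : ℤ) - 2)) := by linear_combination h + hE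
    linarith
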